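/- Let S ∈ ℝ⟨⟨A⟩⟩ have zero constant term and satisfy S = b − a·exp⧢(2S)·c. Write S = Σ_{n≥1} S_n, where S_n is the homogeneous component of S supported on words of length n. Then S₁ = b, S₂ = −ac, and for every n > 2, S_n = −a·( Σ_{k=1}^{n−2} (2^k/k!) Σ_{n₁+⋯+n_k = n−2, n_j ≥ 1} S_{n₁} ⧢ ⋯ ⧢ S_{n_k} )·c. In particular, the homogeneous components of any such S are determined recursively, so the solution S is unique. -/

import Mathlib

/-- The three-letter alphabet `A = {a, b, c}`. -/
inductive Letter : Type
  | a | b | c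
deriving DecidableEq

/-- Words on the alphabet. -/
abbrev Word := List Letter

/-- Noncommutative power series over `ℝ` on the alphabet: a real coefficient
for every word. -/
abbrev Series := Word → ℝ

/-- The series associated to a single word (coefficient `1` on that word, `0` elsewhere). -/
def ofWord (v : Word) : Series := fun w => if w = v then 1 else 0

/-- Concatenation product of series: `⟨PQ, w⟩ = Σ_{uv = w} ⟨P,u⟩⟨Q,v⟩`. -/
noncomputable def cmul (P Q : Series) : Series :=
  fun w => ∑ i ∈ Finset.range (w.length + 1), P (w.take i) * Q (w.drop i)

/-- The subword of `w` selected by a boolean mask. -/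
def select (w : Word) (m : List Bool) : Word :=
  ((w.zip m).filter (fun p => p.2)).map Prod.fst

/-- The (bilinear) shuffle product of two series: the coefficient on `w` is the sum,
over all splittings of the positions of `w` into two complementary subsets, of the
product of the coefficients of the two selected subwords.  This is the bilinear
product determined on words by `ε⧢w = w⧢ε = w` and
`(w₁a₁)⧢(w₂a₂) = (w₁⧢(w₂a₂))a₁ + ((w₁a₁)⧢w₂)a₂`. -/
noncomputable def shuffle (P Q : Series) : Series := fun w =>
  ∑ m : Fin w.length → Bool,
    P (select w (List.ofFn m)) * Q (select w (List.ofFn (fun i => ! m i)))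

/-- Shuffle powers `P^{⧢k}`. -/
noncomputable def shufPow (P : Series) : ℕ → Series
  | 0 => ofWord []
  | k + 1 => shuffle (shufPow P k) P

/-- The shuffle exponential `exp⧢(P) = ε + Σ_{k≥1} P^{⧢k}/k!` (for `P` with zero
constant term only finitely many terms contribute to each coefficient). -/
noncomputable def shufExp (P : Series) : Series :=
  fun w => ∑' k : ℕ, ((k.factorial : ℝ))⁻¹ * shufPow P k w

/-- The homogeneous component of a series supported on words of length `n`. -/
noncomputable def homog (S : Series) (n : ℕ) : Series :=
  fun w => if w.length = n then S w else 0

/-- The iterated shuffle product `P₁ ⧢ ⋯ ⧢ Pₖ` of a finite family of series. -/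
noncomputable def shufList (l : List Series) : Series := l.foldr shuffle (ofWord [])

/-!
Everything is read off homogeneous components. As `S` has no constant term, the degree-`m`
component of the shuffle power `S^{⧢k}` is the sum of `S_{n₁} ⧢ ⋯ ⧢ S_{n_k}` over the
compositions of `m` into `k` positive parts; in particular it vanishes for `m < k`, so each
coefficient of `exp⧢(2S)` is a finite sum. Multiplying by the letters `a` and `c` on both sides
shifts degrees by two, so `S_n = -a·(exp⧢(2S))_{n-2}·c` for `n ≥ 2`, where the degree-`0` part of
`exp⧢(2S)` is `ε`. The right-hand side only involves components of `S` of degree at most `n - 2`,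
so strong induction on `n` shows that two solutions have the same components.
-/

open Finset

lemma length_select_add_length_select_not (w : Word) (m : List Bool) (hm : m.length = w.length) :
    (select w m).length + (select w (m.map not)).length = w.length := by
  induction w generalizing m with
  | nil => simp [select]
  | cons x t ih =>
    cases m with
    | nil => simp at hm
    | cons b l =>
      have := ih l (Nat.succ_inj.mp hm)
      cases b <;> simp [select, List.zip] at * <;> omega

lemma shuffle_comm (P Q : Series) : shuffle P Q = shuffle Q P := by
  funext w
  refine Fintype.sum_bijective (fun m i => ! m i) ?_ _ _ fun m => ?_
  · exact Function.Involutive.bijective fun m => by simp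
  · simp [mul_comm]

lemma shuffle_smul_left (r : ℝ) (P Q : Series) : shuffle (r • P) Q = r • shuffle P Q := by
  funext w
  simp only [shuffle, Pi.smul_apply, smul_eq_mul, mul_sum, mul_assoc]

lemma shuffle_smul_right (r : ℝ) (P Q : Series) : shuffle P (r • Q) = r • shuffle P Q := by
  rw [shuffle_comm, shuffle_smul_left, shuffle_comm]

lemma shuffle_sum_right {ι : Type*} (P : Series) (s : Finset ι) (f : ι → Series) :
    shuffle P (∑ i ∈ s, f i) = ∑ i ∈ s, shuffle P (f i) := by
  funext w
  simp only [shuffle, Finset.sum_apply, mul_sum]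
  exact sum_comm

lemma shuffle_zero_left (Q : Series) : shuffle 0 Q = 0 := by
  funext w
  simp [shuffle]

lemma shufList_eq_zero_of_zero_mem {l : List Series} (h : 0 ∈ l) : shufList l = 0 := by
  induction l with
  | nil => simp at h
  | cons P l ih =>
    change shuffle P (shufList l) = 0
    rcases List.mem_cons.mp h with rfl | h
    · exact shuffle_zero_left _
    · rw [ih h, shuffle_comm, shuffle_zero_left]

lemma shufPow_succ' (P : Series) (k : ℕ) : shufPow P (k + 1) = shuffle P (shufPow P k) :=
  shuffle_comm _ _

lemma shufPow_smul (r : ℝ) (P : Series) (k : ℕ) : shufPow (r • P) k = r ^ k • shufPow P k := by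
  induction k with
  | zero => simp [shufPow]
  | succ k ih =>
    change shuffle (shufPow (r • P) k) (r • P) = _
    rw [ih, shuffle_smul_left, shuffle_smul_right, smul_smul, pow_succ]
    rfl

def IsHomogeneous (P : Series) (n : ℕ) : Prop := ∀ w : Word, w.length ≠ n → P w = 0

lemma isHomogeneous_homog (P : Series) (n : ℕ) : IsHomogeneous (homog P n) n := by
  intro w hw
  simp [homog, hw]

lemma isHomogeneous_ofWord (v : Word) : IsHomogeneous (ofWord v) v.length := by
  intro w hw
  simp only [ofWord, ite_eq_right_iff, one_ne_zero]
  rintro rfl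
  exact hw rfl

lemma IsHomogeneous.homog_self {P : Series} {n : ℕ} (hP : IsHomogeneous P n) : homog P n = P := by
  funext w
  by_cases hw : w.length = n
  · simp [homog, hw]
  · simp [homog, hw, hP w hw]

lemma IsHomogeneous.homog_of_ne {P : Series} {n m : ℕ} (hP : IsHomogeneous P n) (hm : m ≠ n) :
    homog P m = 0 := by
  funext w
  by_cases hw : w.length = m
  · simp [homog, hw, hP w (hw ▸ hm)]
  · simp [homog, hw]

lemma IsHomogeneous.shuffle {P Q : Series} {p q : ℕ} (hP : IsHomogeneous P p)
    (hQ : IsHomogeneous Q q) : IsHomogeneous (shuffle P Q) (p + q) := by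
  intro w hw
  refine sum_eq_zero fun m _ => ?_
  have hlen := length_select_add_length_select_not w (List.ofFn m) List.length_ofFn
  rw [← List.ofFn_comp'] at hlen
  by_cases hp : (select w (List.ofFn m)).length = p
  · rw [hQ _ (by omega), mul_zero]
  · rw [hP _ hp, zero_mul]

lemma homog_sub (P Q : Series) (n : ℕ) : homog (P - Q) n = homog P n - homog Q n := by
  funext w
  by_cases hw : w.length = n <;> simp [homog, hw]

lemma homog_smul (r : ℝ) (P : Series) (n : ℕ) : homog (r • P) n = r • homog P n := by
  funext w
  by_cases hw : w.length = n <;> simp [homog, hw]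

lemma homog_zero (P : Series) : homog P 0 = P [] • ofWord [] := by
  funext w
  cases w <;> simp [homog, ofWord]

lemma homog_length_apply (P : Series) (w : Word) : homog P w.length w = P w := by
  simp [homog]

lemma homog_shuffle (P Q : Series) (n : ℕ) :
    homog (shuffle P Q) n = ∑ pq ∈ antidiagonal n, shuffle (homog P pq.1) (homog Q pq.2) := by
  funext w
  rw [Finset.sum_apply]
  by_cases hw : w.length = n
  · subst hw
    simp only [homog_length_apply, shuffle]
    rw [sum_comm]
    refine sum_congr rfl fun m _ => ?_
    have hlen := length_select_add_length_select_not w (List.ofFn m) List.length_ofFn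
    rw [← List.ofFn_comp'] at hlen
    -- a mask only contributes to the pair of degrees of the two subwords it selects
    rw [sum_eq_single_of_mem
      ((select w (List.ofFn m)).length, (select w (List.ofFn fun i => ! m i)).length)
      (HasAntidiagonal.mem_antidiagonal.mpr hlen)]
    · simp [homog]
    · rintro ⟨p, q⟩ hpq hne
      rw [HasAntidiagonal.mem_antidiagonal] at hpq
      by_cases hp : (select w (List.ofFn m)).length = p
      · have hq : (select w (List.ofFn fun i => ! m i)).length ≠ q := by
          rintro rfl; exact hne (by rw [hp])
        simp [homog, hq]
      · simp [homog, hp]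
  · rw [isHomogeneous_homog _ _ w hw]
    refine (sum_eq_zero fun pq hpq => ?_).symm
    exact ((isHomogeneous_homog P pq.1).shuffle (isHomogeneous_homog Q pq.2)) w
      (by rwa [HasAntidiagonal.mem_antidiagonal.mp hpq])

lemma sum_antidiagonalTuple_succ {M : Type*} [AddCommMonoid M] (k n : ℕ)
    (f : (Fin (k + 1) → ℕ) → M) :
    ∑ ν ∈ Nat.antidiagonalTuple (k + 1) n, f ν =
      ∑ pq ∈ antidiagonal n, ∑ ν ∈ Nat.antidiagonalTuple k pq.2, f (Fin.cons pq.1 ν) := by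
  rw [sum_sigma']
  symm
  refine sum_nbij' (fun x : (_ : ℕ × ℕ) × (Fin k → ℕ) => Fin.cons x.1.1 x.2)
    (fun ν => (⟨(ν 0, ∑ j : Fin k, ν j.succ), Fin.tail ν⟩ : (_ : ℕ × ℕ) × (Fin k → ℕ)))
    ?_ ?_ ?_ ?_ fun _ _ => rfl
  · rintro ⟨⟨p, q⟩, ν⟩ hx
    simp only [mem_sigma, HasAntidiagonal.mem_antidiagonal, Nat.mem_antidiagonalTuple] at hx ⊢
    rw [Fin.sum_cons, hx.2, hx.1]
  · intro ν hν
    simp only [mem_sigma, HasAntidiagonal.mem_antidiagonal, Nat.mem_antidiagonalTuple,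
      Fin.tail] at hν ⊢
    exact ⟨by rw [← hν, Fin.sum_univ_succ], trivial⟩
  · rintro ⟨⟨p, q⟩, ν⟩ hx
    simp only [mem_sigma, HasAntidiagonal.mem_antidiagonal, Nat.mem_antidiagonalTuple] at hx
    simp [hx.2]
  · intro ν _
    exact Fin.cons_self_tail ν

lemma homog_shufPow (P : Series) (k n : ℕ) :
    homog (shufPow P k) n =
      ∑ ν ∈ Nat.antidiagonalTuple k n, shufList (List.ofFn fun j => homog P (ν j)) := by
  induction k generalizing n with
  | zero =>
    cases n with
    | zero => simpa [shufPow, shufList] using (isHomogeneous_ofWord []).homog_self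
    | succ n => exact (isHomogeneous_ofWord []).homog_of_ne n.succ_ne_zero
  | succ k ih =>
    rw [shufPow_succ', homog_shuffle, sum_antidiagonalTuple_succ]
    refine sum_congr rfl fun pq _ => ?_
    simp only [ih, shuffle_sum_right, List.ofFn_succ, Fin.cons_zero, Fin.cons_succ]
    rfl

lemma homog_shufPow_of_apply_nil {P : Series} (hP : P [] = 0) (k n : ℕ) :
    homog (shufPow P k) n =
      ∑ ν ∈ (Nat.antidiagonalTuple k n).filter (fun ν => ∀ j, 1 ≤ ν j),
        shufList (List.ofFn fun j => homog P (ν j)) := by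
  rw [homog_shufPow, sum_filter_of_ne fun ν _ hne => ?_]
  intro j
  by_contra! hj
  refine hne (shufList_eq_zero_of_zero_mem (List.mem_ofFn.mpr ⟨j, ?_⟩))
  rw [Nat.lt_one_iff.mp hj, homog_zero, hP, zero_smul]

lemma shufPow_apply_eq_zero_of_length_lt {P : Series} (hP : P [] = 0) {k : ℕ} {w : Word}
    (hw : w.length < k) : shufPow P k w = 0 := by
  rw [← homog_length_apply (shufPow P k) w, homog_shufPow_of_apply_nil hP, Finset.sum_apply]
  refine sum_eq_zero fun ν hν => absurd hν ?_
  simp only [mem_filter, Nat.mem_antidiagonalTuple, not_and, not_forall, not_le]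
  intro hsum
  by_contra! hpos
  have : k ≤ ∑ j, ν j := by simpa using sum_le_sum fun j (_ : j ∈ univ) => hpos j
  omega

lemma shufExp_apply_eq_sum {P : Series} (hP : P [] = 0) (w : Word) :
    shufExp P w = ∑ k ∈ range (w.length + 1), ((k.factorial : ℝ))⁻¹ * shufPow P k w := by
  refine tsum_eq_sum fun k hk => ?_
  rw [mem_range, not_lt] at hk
  rw [shufPow_apply_eq_zero_of_length_lt hP (by omega), mul_zero]

lemma shufExp_apply_nil {P : Series} (hP : P [] = 0) : shufExp P [] = 1 := by
  simp [shufExp_apply_eq_sum hP, shufPow, ofWord]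

lemma homog_shufExp {P : Series} (hP : P [] = 0) (n : ℕ) :
    homog (shufExp P) n = ∑ k ∈ range (n + 1), ((k.factorial : ℝ))⁻¹ • homog (shufPow P k) n := by
  funext w
  simp only [Finset.sum_apply, Pi.smul_apply, smul_eq_mul, homog]
  split_ifs with hw
  · rw [shufExp_apply_eq_sum hP, hw]
  · simp

lemma cmul_ofWord_ofWord (u v : Word) : cmul (ofWord u) (ofWord v) = ofWord (u ++ v) := by
  funext w
  simp only [cmul, ofWord, mul_ite, mul_one, mul_zero]
  by_cases hw : w = u ++ v
  · subst hw
    rw [sum_eq_single_of_mem u.length (by simp)]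
    · simp
    · intro i hi hne
      rw [if_neg]
      intro h
      have := congrArg List.length h
      simp only [List.length_drop, List.length_append, mem_range] at this hi
      omega
  · rw [if_neg hw]
    refine sum_eq_zero fun i _ => ?_
    simp only [ite_eq_right_iff, one_ne_zero, imp_false]
    exact fun hd ht => hw (by rw [← List.take_append_drop i w, ht, hd])

lemma IsHomogeneous.homog_cmul_left {P : Series} {p : ℕ} (hP : IsHomogeneous P p) (Q : Series)
    (n : ℕ) : homog (cmul P Q) (p + n) = cmul P (homog Q n) := by
  funext w
  simp only [homog, cmul, ite_sum_zero]
  refine sum_congr rfl fun i hi => ?_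
  by_cases hPi : P (w.take i) = 0
  · simp [hPi]
  · have hlen : (w.take i).length = p := by_contra fun h => hPi (hP _ h)
    have hiff : (w.drop i).length = n ↔ w.length = p + n := by
      simp only [List.length_take, List.length_drop, mem_range] at hlen hi ⊢
      omega
    simp only [hiff, mul_ite, mul_zero]

lemma IsHomogeneous.homog_cmul_right {Q : Series} {q : ℕ} (hQ : IsHomogeneous Q q) (P : Series)
    (n : ℕ) : homog (cmul P Q) (n + q) = cmul (homog P n) Q := by
  funext w
  simp only [homog, cmul, ite_sum_zero]
  refine sum_congr rfl fun i hi => ?_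
  by_cases hQi : Q (w.drop i) = 0
  · simp [hQi]
  · have hlen : (w.drop i).length = q := by_contra fun h => hQi (hQ _ h)
    have hiff : (w.take i).length = n ↔ w.length = n + q := by
      simp only [List.length_take, List.length_drop, mem_range] at hlen hi ⊢
      omega
    simp only [hiff, ite_mul, zero_mul]

lemma IsHomogeneous.homog_cmul_of_lt {Q : Series} {q : ℕ} (hQ : IsHomogeneous Q q) (P : Series)
    {n : ℕ} (hn : n < q) : homog (cmul P Q) n = 0 := by
  funext w
  simp only [homog, cmul]
  split_ifs with hw
  · refine sum_eq_zero fun i _ => ?_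
    rw [hQ _ (by simp; omega), mul_zero]
  · rfl

lemma homog_cmul_letter_cmul_letter (x z : Letter) (E : Series) {n : ℕ} (hn : 2 ≤ n) :
    homog (cmul (ofWord [x]) (cmul E (ofWord [z]))) n =
      cmul (ofWord [x]) (cmul (homog E (n - 2)) (ofWord [z])) := by
  obtain ⟨m, rfl⟩ := Nat.exists_eq_add_of_le' hn
  rw [Nat.add_sub_cancel, show m + 2 = [x].length + (m + [z].length) by simp; omega,
    (isHomogeneous_ofWord _).homog_cmul_left, (isHomogeneous_ofWord _).homog_cmul_right]

lemma homog_cmul_letter_cmul_letter_one (x z : Letter) (E : Series) :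
    homog (cmul (ofWord [x]) (cmul E (ofWord [z]))) 1 = 0 := by
  rw [show 1 = [x].length + 0 from rfl, (isHomogeneous_ofWord _).homog_cmul_left,
    (isHomogeneous_ofWord _).homog_cmul_of_lt _ (by simp)]
  funext w
  simp [cmul]

noncomputable def expComponent (S : Series) (m : ℕ) : Series :=
  fun u => ∑ k ∈ Icc 1 m,
    (2 : ℝ) ^ k / (Nat.factorial k : ℝ) *
      ∑ ν ∈ (Finset.Nat.antidiagonalTuple k m).filter (fun ν => ∀ j, 1 ≤ ν j),
        shufList (List.ofFn (fun j : Fin k => homog S (ν j))) u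

lemma homog_shufExp_two_smul {S : Series} (hS : S [] = 0) {m : ℕ} (hm : 1 ≤ m) :
    homog (shufExp ((2 : ℝ) • S)) m = expComponent S m := by
  have h2S : ((2 : ℝ) • S) [] = 0 := by simp [hS]
  rw [homog_shufExp h2S, range_eq_Ico, sum_eq_sum_Ico_succ_bot (by omega),
    zero_add, Ico_add_one_right_eq_Icc]
  obtain ⟨m, rfl⟩ := Nat.exists_eq_add_of_le' hm
  funext u
  simp only [shufPow_smul, homog_smul, homog_shufPow_of_apply_nil hS, expComponent,
    Nat.antidiagonalTuple_zero_succ, filter_empty, sum_empty, smul_zero, zero_add,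
    Finset.sum_apply, Pi.smul_apply, smul_eq_mul]
  refine sum_congr rfl fun k _ => ?_
  ring

lemma expComponent_congr {S S' : Series} {m : ℕ} (h : ∀ j ≤ m, homog S j = homog S' j) :
    expComponent S m = expComponent S' m := by
  funext u
  refine sum_congr rfl fun k _ => congrArg _ (sum_congr rfl fun ν hν => ?_)
  have hsum := Nat.mem_antidiagonalTuple.mp (mem_filter.mp hν).1
  have hle (j : Fin k) : ν j ≤ m := hsum ▸ single_le_sum (by simp) (mem_univ j)
  simp only [h _ (hle _)]

lemma homog_of_solution {S : Series} (h0 : S [] = 0)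
    (hS : S = ofWord [Letter.b] -
        cmul (ofWord [Letter.a]) (cmul (shufExp ((2 : ℝ) • S)) (ofWord [Letter.c]))) :
    homog S 1 = ofWord [Letter.b] ∧
    homog S 2 = -ofWord [Letter.a, Letter.c] ∧
    ∀ n : ℕ, 2 < n →
      homog S n = -cmul (ofWord [Letter.a]) (cmul (expComponent S (n - 2)) (ofWord [Letter.c])) := by
  have hsplit (n : ℕ) := (congrArg (homog · n) hS).trans (homog_sub _ _ n)
  have hb : IsHomogeneous (ofWord [Letter.b]) 1 := isHomogeneous_ofWord _
  refine ⟨?_, ?_, fun n hn => ?_⟩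
  · rw [hsplit, hb.homog_self, homog_cmul_letter_cmul_letter_one, sub_zero]
  · have hE : homog (shufExp ((2 : ℝ) • S)) 0 = ofWord [] := by
      rw [homog_zero, shufExp_apply_nil (by simp [h0]), one_smul]
    rw [hsplit, hb.homog_of_ne (by simp), homog_cmul_letter_cmul_letter _ _ _ le_rfl,
      Nat.sub_self, hE, cmul_ofWord_ofWord, cmul_ofWord_ofWord, zero_sub]
    rfl
  · rw [hsplit, hb.homog_of_ne (by simp; omega), homog_cmul_letter_cmul_letter _ _ _ hn.le,
      homog_shufExp_two_smul h0 (by omega), zero_sub]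

lemma eq_of_homog_recursion {S S' : Series} (h0 : S [] = 0) (h0' : S' [] = 0)
    (h1 : homog S 1 = homog S' 1) (h2 : homog S 2 = homog S' 2)
    (hrec : ∀ n : ℕ, 2 < n →
      homog S n = -cmul (ofWord [Letter.a]) (cmul (expComponent S (n - 2)) (ofWord [Letter.c])))
    (hrec' : ∀ n : ℕ, 2 < n →
      homog S' n = -cmul (ofWord [Letter.a]) (cmul (expComponent S' (n - 2)) (ofWord [Letter.c]))) :
    S = S' := by
  have key (n : ℕ) : homog S n = homog S' n := by
    induction n using Nat.strong_induction_on with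
    | _ n ih =>
      match n, ih with
      | 0, _ => rw [homog_zero, homog_zero, h0, h0']
      | 1, _ => exact h1
      | 2, _ => exact h2
      | n + 3, ih =>
        rw [hrec _ (by omega), hrec' _ (by omega),
          expComponent_congr fun j hj => ih j (by omega)]
  funext w
  rw [← homog_length_apply S, ← homog_length_apply S', key]

/-- If `S` has zero constant term and satisfies `S = b − a·exp⧢(2S)·c`, then its
homogeneous components satisfy `S₁ = b`, `S₂ = −ac`, and for `n > 2`,
`Sₙ = −a·( Σ_{k=1}^{n−2} (2^k/k!) Σ_{n₁+⋯+n_k = n−2, n_j ≥ 1} S_{n₁} ⧢ ⋯ ⧢ S_{n_k} )·c`;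
in particular the components are determined recursively, so such an `S` is unique. -/
theorem homog_component_recursion (S : Series) (h0 : S [] = 0)
    (hS : S = ofWord [Letter.b] -
        cmul (ofWord [Letter.a]) (cmul (shufExp ((2 : ℝ) • S)) (ofWord [Letter.c]))) :
    homog S 1 = ofWord [Letter.b] ∧
    homog S 2 = -ofWord [Letter.a, Letter.c] ∧
    (∀ n : ℕ, 2 < n →
      homog S n =
        -cmul (ofWord [Letter.a])
          (cmul
            (fun u => ∑ k ∈ Finset.Icc 1 (n - 2),
              (2 : ℝ) ^ k / (Nat.factorial k : ℝ) *
                ∑ ν ∈ (Finset.Nat.antidiagonalTuple k (n - 2)).filter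
                    (fun ν => ∀ j, 1 ≤ ν j),
                  shufList (List.ofFn (fun j : Fin k => homog S (ν j))) u)
            (ofWord [Letter.c]))) ∧
    (∀ S' : Series, S' [] = 0 →
      S' = ofWord [Letter.b] -
          cmul (ofWord [Letter.a]) (cmul (shufExp ((2 : ℝ) • S')) (ofWord [Letter.c])) →
      S = S') := by
  obtain ⟨h1, h2, hrec⟩ := homog_of_solution h0 hS
  refine ⟨h1, h2, hrec, fun S' h0' hS' => ?_⟩
  obtain ⟨h1', h2', hrec'⟩ := homog_of_solution h0' hS'
  exact eq_of_homog_recursion h0 h0' (h1.trans h1'.symm) (h2.trans h2'.symm) hrec hrec'
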